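/- arXiv:2202.12790 — 4 statements merged into one kernel-verified Lean document; each statement's English description precedes it below -/
import Mathlib

section
/- Let V be a normed vector space, μ, ν probability measures on V, and c(x,y) = h(‖x-y‖) with h strictly increasing. If the interior of supp(μ) is not contained in supp(ν), then μ is not a ν-projected measure: for every coupling π ∈ Π(μ,ν) there exists (x,y) ∈ supp(π) with c(x,y) > inf_{x' ∈ supp(μ)} c(x',y). -/
open MeasureTheory
open scoped ENNReal

/-- Topological support of a measure: points all of whose open neighborhoods
have positive measure. -/
def msupport {X : Type*} [TopologicalSpace X] [MeasurableSpace X]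
    (μ : Measure X) : Set X :=
  {x | ∀ U : Set X, IsOpen U → x ∈ U → μ U ≠ 0}

/-- `π` is a coupling of `μ` and `ν`. -/
def IsCoupling {X Y : Type*} [MeasurableSpace X] [MeasurableSpace Y]
    (π : Measure (X × Y)) (μ : Measure X) (ν : Measure Y) : Prop :=
  IsProbabilityMeasure π ∧ π.map Prod.fst = μ ∧ π.map Prod.snd = ν

/-- Optimal transport cost (in `ℝ≥0∞`). -/
noncomputable def OTCost {X Y : Type*} [MeasurableSpace X] [MeasurableSpace Y]
    (c : X → Y → ℝ) (μ : Measure X) (ν : Measure Y) : ℝ≥0∞ :=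
  ⨅ (π : Measure (X × Y)) (_ : IsCoupling π μ ν),
    ∫⁻ p, ENNReal.ofReal (c p.1 p.2) ∂π

lemma exists_mem_msupport {X : Type*} [TopologicalSpace X] [SecondCountableTopology X]
    [MeasurableSpace X] (μ : Measure X) {W : Set X} (_hW : IsOpen W) (hμ : μ W ≠ 0) :
    ∃ q ∈ W, q ∈ msupport μ := by
  by_contra hc
  push_neg at hc
  apply hμ
  apply measure_null_of_locally_null
  intro x hx
  have hx' := hc x hx
  simp only [msupport, Set.mem_setOf_eq, not_forall] at hx'
  obtain ⟨U, hUo, hxU, hU0⟩ := hx'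
  exact ⟨U, mem_nhdsWithin_of_mem_nhds (hUo.mem_nhds hxU), not_not.mp hU0⟩

theorem stmt8 {V : Type*} [NormedAddCommGroup V] [NormedSpace ℝ V]
    [SecondCountableTopology V] [MeasurableSpace V] [BorelSpace V]
    (h : ℝ → ℝ) (hmono : StrictMonoOn h (Set.Ici 0))
    (μ ν : Measure V) [IsProbabilityMeasure μ] [IsProbabilityMeasure ν]
    (hsub : ¬ interior (msupport μ) ⊆ msupport ν) :
    ∀ π : Measure (V × V), IsCoupling π μ ν →
      ∃ q ∈ msupport π,
        sInf ((fun x' => h ‖x' - q.2‖) '' msupport μ) < h ‖q.1 - q.2‖ := by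
  rintro π ⟨hπprob, hfst, hsnd⟩
  obtain ⟨x₀, hx₀int, hx₀ν⟩ := Set.not_subset.mp hsub
  simp only [msupport, Set.mem_setOf_eq, not_forall] at hx₀ν
  obtain ⟨U, hUo, hx₀U, hU0⟩ := hx₀ν
  rw [not_not] at hU0
  obtain ⟨r, hr, hball⟩ := Metric.isOpen_iff.mp (isOpen_interior.inter hUo) x₀ ⟨hx₀int, hx₀U⟩
  have hx₀supp : x₀ ∈ msupport μ := interior_subset hx₀int
  have hμball : μ (Metric.ball x₀ (r / 2)) ≠ 0 :=
    hx₀supp _ Metric.isOpen_ball (Metric.mem_ball_self (by linarith))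
  have hπW : π (Prod.fst ⁻¹' Metric.ball x₀ (r / 2)) ≠ 0 := by
    rwa [← Measure.map_apply measurable_fst measurableSet_ball, hfst]
  obtain ⟨q, hqW, hqsupp⟩ :=
    exists_mem_msupport π (Metric.isOpen_ball.preimage continuous_fst) hπW
  have hq2 : q.2 ∈ msupport ν := by
    intro U' hU'o hq2U'
    have hpos := hqsupp (Prod.snd ⁻¹' U') (hU'o.preimage continuous_snd) hq2U'
    rwa [← Measure.map_apply measurable_snd hU'o.measurableSet, hsnd] at hpos
  have hq2U : q.2 ∉ Metric.ball x₀ r := fun hh => hq2 U hUo (hball hh).2 hU0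
  have hq1 : dist q.1 x₀ < r / 2 := Metric.mem_ball.mp hqW
  have hdist2 : r ≤ dist q.2 x₀ := not_lt.mp (fun hh => hq2U (Metric.mem_ball.mpr hh))
  set d := ‖q.1 - q.2‖ with hd_def
  have hd : r / 2 < d := by
    have ht := dist_triangle q.2 q.1 x₀
    have : d = dist q.2 q.1 := by rw [dist_eq_norm, norm_sub_rev]
    linarith
  have hdpos : 0 < d := by linarith
  set t := r / (4 * d) with ht_def
  have ht0 : 0 < t := by positivity
  have ht1 : t < 1 := by
    rw [ht_def, div_lt_one (by positivity)]; linarith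
  set x' := q.1 + t • (q.2 - q.1) with hx'_def
  have hx'1 : ‖x' - q.1‖ = r / 4 := by
    have : x' - q.1 = t • (q.2 - q.1) := by rw [hx'_def]; abel
    rw [this, norm_smul, Real.norm_eq_abs, abs_of_pos ht0, norm_sub_rev, ← hd_def, ht_def]
    field_simp
  have hx'ball : x' ∈ Metric.ball x₀ r := by
    have htri := dist_triangle x' q.1 x₀
    have hdx : dist x' q.1 = r / 4 := by rw [dist_eq_norm]; exact hx'1
    rw [Metric.mem_ball]
    linarith
  have hx'supp : x' ∈ msupport μ := interior_subset (hball hx'ball).1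
  have hx'q2 : ‖x' - q.2‖ = (1 - t) * d := by
    have : x' - q.2 = (1 - t) • (q.1 - q.2) := by
      rw [hx'_def]; module
    rw [this, norm_smul, Real.norm_eq_abs, abs_of_pos (by linarith), hd_def]
  have hlt : ‖x' - q.2‖ < d := by rw [hx'q2]; nlinarith
  refine ⟨q, hqsupp, ?_⟩
  have hbdd : BddBelow ((fun x' => h ‖x' - q.2‖) '' msupport μ) := by
    refine ⟨h 0, ?_⟩
    rintro a ⟨z, _, rfl⟩
    show h 0 ≤ h ‖z - q.2‖
    rcases eq_or_lt_of_le (norm_nonneg (z - q.2)) with heq | hlt'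
    · rw [← heq]
    · exact (hmono (Set.mem_Ici.mpr le_rfl) (norm_nonneg _) hlt').le
  calc sInf ((fun x' => h ‖x' - q.2‖) '' msupport μ) ≤ h ‖x' - q.2‖ :=
        csInf_le hbdd ⟨x', hx'supp, rfl⟩
    _ < h ‖q.1 - q.2‖ := hmono (norm_nonneg _) (norm_nonneg _) hlt
end

section
/- Let X, Y be Polish spaces, c continuous, and μ, ν probability measures. If supp(μ) is not contained in the topological closure of Γ_c(μ,ν) := ⋃_{y ∈ supp(ν)} argmin_{x ∈ supp(μ)} c(x,y), then for every coupling π ∈ Π(μ,ν) there exists (x,y) ∈ supp(π) with c(x,y) > inf_{x' ∈ supp(μ)} c(x',y); in particular μ is not a ν-projected measure. -/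
open MeasureTheory
open scoped ENNReal

/-- In a second countable space, the complement of the support is null. -/
lemma compl_msupport_null {Z : Type*} [TopologicalSpace Z]
    [SecondCountableTopology Z] [MeasurableSpace Z]
    (π : Measure Z) : π (msupport π)ᶜ = 0 := by
  have hcompl : (msupport π)ᶜ = ⋃₀ {U | IsOpen U ∧ π U = 0} := by
    ext z
    simp only [msupport, Set.mem_compl_iff, Set.mem_setOf_eq, Set.mem_sUnion, not_forall]
    constructor
    · rintro ⟨U, hU, hz, h0⟩
      exact ⟨U, ⟨hU, not_not.mp h0⟩, hz⟩
    · rintro ⟨U, ⟨hU, h0⟩, hz⟩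
      exact ⟨U, hU, hz, not_not.mpr h0⟩
  obtain ⟨T, hTc, hTS, hTU⟩ :=
    TopologicalSpace.isOpen_sUnion_countable {U | IsOpen U ∧ π U = 0}
      (fun s hs => hs.1)
  rw [hcompl, ← hTU]
  exact (measure_sUnion_null_iff hTc).2 fun s hs => (hTS hs).2

theorem stmt9 {X Y : Type*}
    [TopologicalSpace X] [PolishSpace X] [MeasurableSpace X] [BorelSpace X]
    [TopologicalSpace Y] [PolishSpace Y] [MeasurableSpace Y] [BorelSpace Y]
    (c : X → Y → ℝ) (hc : Continuous fun p : X × Y => c p.1 p.2)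
    (hc0 : ∀ x y, 0 ≤ c x y)
    (μ : Measure X) (ν : Measure Y)
    [IsProbabilityMeasure μ] [IsProbabilityMeasure ν]
    (hsub : ¬ msupport μ ⊆ closure (⋃ y ∈ msupport ν,
      {x ∈ msupport μ | c x y = sInf ((fun x' => c x' y) '' msupport μ)})) :
    ∀ π : Measure (X × Y), IsCoupling π μ ν →
      ∃ q ∈ msupport π, sInf ((fun x' => c x' q.2) '' msupport μ) < c q.1 q.2 := by
  intro π ⟨hprob, hfst, hsnd⟩
  set Γ := ⋃ y ∈ msupport ν,
      {x ∈ msupport μ | c x y = sInf ((fun x' => c x' y) '' msupport μ)} with hΓ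
  obtain ⟨x₀, hx₀s, hx₀c⟩ := Set.not_subset.mp hsub
  set U := (closure Γ)ᶜ with hU
  have hUopen : IsOpen U := isOpen_compl_iff.mpr isClosed_closure
  -- marginal computation
  have hμeq : ∀ V : Set X, IsOpen V → μ V = π (Prod.fst ⁻¹' V) := by
    intro V hV
    rw [← hfst, Measure.map_apply measurable_fst hV.measurableSet]
  have hνeq : ∀ V : Set Y, IsOpen V → ν V = π (Prod.snd ⁻¹' V) := by
    intro V hV
    rw [← hsnd, Measure.map_apply measurable_snd hV.measurableSet]
  have hπU : π (Prod.fst ⁻¹' U) ≠ 0 := by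
    rw [← hμeq U hUopen]; exact hx₀s U hUopen hx₀c
  -- find a point of the support over U
  have hq : ∃ q, q ∈ msupport π ∧ q ∈ Prod.fst ⁻¹' U := by
    by_contra h
    push_neg at h
    have hsub' : Prod.fst ⁻¹' U ⊆ (msupport π)ᶜ := fun q hqU hqs => h q hqs hqU
    exact hπU (measure_mono_null hsub' (compl_msupport_null π))
  obtain ⟨q, hqs, hqU⟩ := hq
  refine ⟨q, hqs, ?_⟩
  -- marginals of support points
  have hq1 : q.1 ∈ msupport μ := by
    intro V hV hqV
    rw [hμeq V hV]
    exact hqs (Prod.fst ⁻¹' V) (hV.preimage continuous_fst) hqV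
  have hq2 : q.2 ∈ msupport ν := by
    intro V hV hqV
    rw [hνeq V hV]
    exact hqs (Prod.snd ⁻¹' V) (hV.preimage continuous_snd) hqV
  -- q.1 is not in Γ
  have hq1Γ : q.1 ∉ Γ := fun h => hqU (subset_closure h)
  have hne : c q.1 q.2 ≠ sInf ((fun x' => c x' q.2) '' msupport μ) := by
    intro h
    exact hq1Γ (Set.mem_biUnion hq2 ⟨hq1, h⟩)
  have hbdd : BddBelow ((fun x' => c x' q.2) '' msupport μ) :=
    ⟨0, by rintro a ⟨x, _, rfl⟩; exact hc0 x q.2⟩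
  have hle : sInf ((fun x' => c x' q.2) '' msupport μ) ≤ c q.1 q.2 :=
    csInf_le hbdd ⟨q.1, hq1, rfl⟩
  exact lt_of_le_of_ne hle (Ne.symm hne)
end

section
/- Suppose f : X → ℝ and g : Y → ℝ satisfy f(x) + g(y) ≤ c(x,y) for all (x,y), and ∫ f dμ + ∫ g dν = OT_c(μ,ν) for probability measures μ, ν with finite transport cost. Define h := g^c (the c-conjugate of g). Then f ≤ h on X, g ≤ h^c on Y, and h, h^c are also a pair of optimal dual potentials: ∫ h dμ + ∫ h^c dν = OT_c(μ,ν). Consequently f = h μ-almost surely and g = h^c ν-almost surely. -/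
open MeasureTheory
open scoped ENNReal

/-- Optimal transport cost (real-valued, for bounded costs). -/
noncomputable def OTr {X Y : Type*} [MeasurableSpace X] [MeasurableSpace Y]
    (c : X → Y → ℝ) (μ : Measure X) (ν : Measure Y) : ℝ :=
  sInf {r : ℝ | ∃ π : Measure (X × Y), IsCoupling π μ ν ∧ r = ∫ p, c p.1 p.2 ∂π}

theorem stmt12 {X Y : Type*} [Nonempty X] [Nonempty Y]
    [TopologicalSpace X] [PolishSpace X] [MeasurableSpace X] [BorelSpace X]
    [TopologicalSpace Y] [PolishSpace Y] [MeasurableSpace Y] [BorelSpace Y]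
    (c : X → Y → ℝ) (hc : Continuous fun p : X × Y => c p.1 p.2)
    (hc0 : ∀ x y, 0 ≤ c x y) (C : ℝ) (hcC : ∀ x y, c x y ≤ C)
    (μ : Measure X) (ν : Measure Y)
    [IsProbabilityMeasure μ] [IsProbabilityMeasure ν]
    (f : X → ℝ) (g : Y → ℝ) (hfm : Measurable f) (hgm : Measurable g)
    (hfb : ∃ M, ∀ x, |f x| ≤ M) (hgb : ∃ M, ∀ y, |g y| ≤ M)
    (hfeas : ∀ x y, f x + g y ≤ c x y)
    (hopt : ∫ x, f x ∂μ + ∫ y, g y ∂ν = OTr c μ ν)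
    (h : X → ℝ) (hdef : ∀ x, h x = ⨅ y, (c x y - g y))
    (hc' : Y → ℝ) (hc'def : ∀ y, hc' y = ⨅ x, (c x y - h x)) :
    (∀ x, f x ≤ h x) ∧ (∀ y, g y ≤ hc' y) ∧
      (∫ x, h x ∂μ + ∫ y, hc' y ∂ν = OTr c μ ν) ∧
      f =ᵐ[μ] h ∧ g =ᵐ[ν] hc' := by
  obtain ⟨Mg, hMg⟩ := hgb
  obtain ⟨Mf, hMf⟩ := hfb
  have hMg0 : 0 ≤ Mg := le_trans (abs_nonneg _) (hMg (Classical.arbitrary Y))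
  have hC0 : 0 ≤ C :=
    le_trans (hc0 (Classical.arbitrary X) (Classical.arbitrary Y))
      (hcC (Classical.arbitrary X) (Classical.arbitrary Y))
  -- bounds for the family defining h
  have hbddh : ∀ x, BddBelow (Set.range fun y => c x y - g y) := by
    intro x
    refine ⟨-Mg, ?_⟩
    rintro r ⟨y, rfl⟩
    have := (abs_le.1 (hMg y)).2
    have := hc0 x y
    dsimp only
    linarith
  have hlow : ∀ x, -Mg ≤ h x := by
    intro x
    rw [hdef x]
    refine le_ciInf fun y => ?_
    have := (abs_le.1 (hMg y)).2
    have := hc0 x y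
    linarith
  have hup : ∀ x, h x ≤ C + Mg := by
    intro x
    rw [hdef x]
    refine le_trans (ciInf_le (hbddh x) (Classical.arbitrary Y)) ?_
    have := (abs_le.1 (hMg (Classical.arbitrary Y))).1
    have := hcC x (Classical.arbitrary Y)
    linarith
  have h1 : ∀ x, f x ≤ h x := by
    intro x
    rw [hdef x]
    refine le_ciInf fun y => ?_
    have := hfeas x y
    linarith
  have hkey : ∀ x y, h x ≤ c x y - g y := by
    intro x y
    rw [hdef x]
    exact ciInf_le (hbddh x) y
  have hbddh' : ∀ y, BddBelow (Set.range fun x => c x y - h x) := by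
    intro y
    refine ⟨-(C + Mg), ?_⟩
    rintro r ⟨x, rfl⟩
    have := hup x
    have := hc0 x y
    dsimp only
    linarith
  have h2 : ∀ y, g y ≤ hc' y := by
    intro y
    rw [hc'def y]
    refine le_ciInf fun x => ?_
    have := hkey x y
    linarith
  have hkey2 : ∀ x y, h x + hc' y ≤ c x y := by
    intro x y
    have := hc'def y ▸ ciInf_le (hbddh' y) x
    linarith
  have hlow' : ∀ y, -(C + Mg) ≤ hc' y := by
    intro y
    rw [hc'def y]
    refine le_ciInf fun x => ?_
    have := hup x
    have := hc0 x y
    linarith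
  have hup' : ∀ y, hc' y ≤ C + Mg := by
    intro y
    rw [hc'def y]
    refine le_trans (ciInf_le (hbddh' y) (Classical.arbitrary X)) ?_
    have := hlow (Classical.arbitrary X)
    have := hcC (Classical.arbitrary X) y
    linarith
  -- measurability of h and hc'
  have hhm : Measurable h := by
    have heq : h = fun x => ⨅ y, (c x y - g y) := funext hdef
    rw [heq]
    refine (upperSemicontinuous_ciInf (fun x => hbddh x) fun y => ?_).measurable
    exact ((hc.comp (continuous_id.prodMk continuous_const)).sub
      continuous_const).upperSemicontinuous
  have hhm' : Measurable hc' := by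
    have heq : hc' = fun y => ⨅ x, (c x y - h x) := funext hc'def
    rw [heq]
    refine (upperSemicontinuous_ciInf (fun y => hbddh' y) fun x => ?_).measurable
    exact ((hc.comp (continuous_const.prodMk continuous_id)).sub
      continuous_const).upperSemicontinuous
  -- integrability
  have hinth : Integrable h μ := by
    refine (integrable_const (C + Mg)).mono' hhm.aestronglyMeasurable ?_
    filter_upwards with x
    rw [Real.norm_eq_abs, abs_le]
    exact ⟨le_trans (by linarith) (hlow x), hup x⟩
  have hinth' : Integrable hc' ν := by
    refine (integrable_const (C + Mg)).mono' hhm'.aestronglyMeasurable ?_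
    filter_upwards with y
    rw [Real.norm_eq_abs, abs_le]
    exact ⟨hlow' y, hup' y⟩
  have hintf : Integrable f μ := by
    refine (integrable_const Mf).mono' hfm.aestronglyMeasurable ?_
    filter_upwards with x
    rw [Real.norm_eq_abs]
    exact hMf x
  have hintg : Integrable g ν := by
    refine (integrable_const Mg).mono' hgm.aestronglyMeasurable ?_
    filter_upwards with y
    rw [Real.norm_eq_abs]
    exact hMg y
  -- the set defining OTr
  set S : Set ℝ :=
    {r : ℝ | ∃ π : Measure (X × Y), IsCoupling π μ ν ∧ r = ∫ p, c p.1 p.2 ∂π} with hS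
  have hSne : S.Nonempty := by
    refine ⟨∫ p, c p.1 p.2 ∂(μ.prod ν), μ.prod ν, ⟨inferInstance, ?_, ?_⟩, rfl⟩
    · simp [Measure.map_fst_prod]
    · simp [Measure.map_snd_prod]
  -- upper bound for ∫h + ∫hc' over any coupling
  have hub : ∀ r ∈ S, ∫ x, h x ∂μ + ∫ y, hc' y ∂ν ≤ r := by
    rintro r ⟨π, ⟨hπp, hπ1, hπ2⟩, rfl⟩
    haveI := hπp
    have e1 : ∫ x, h x ∂μ = ∫ p, h p.1 ∂π := by
      rw [← hπ1, integral_map measurable_fst.aemeasurable hhm.aestronglyMeasurable]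
    have e2 : ∫ y, hc' y ∂ν = ∫ p, hc' p.2 ∂π := by
      rw [← hπ2, integral_map measurable_snd.aemeasurable hhm'.aestronglyMeasurable]
    have i1 : Integrable (fun p : X × Y => h p.1) π := by
      refine (integrable_const (C + Mg)).mono'
        (hhm.comp measurable_fst).aestronglyMeasurable ?_
      filter_upwards with p
      rw [Real.norm_eq_abs, abs_le]
      exact ⟨le_trans (by linarith) (hlow p.1), hup p.1⟩
    have i2 : Integrable (fun p : X × Y => hc' p.2) π := by
      refine (integrable_const (C + Mg)).mono'
        (hhm'.comp measurable_snd).aestronglyMeasurable ?_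
      filter_upwards with p
      rw [Real.norm_eq_abs, abs_le]
      exact ⟨hlow' p.2, hup' p.2⟩
    have ic : Integrable (fun p : X × Y => c p.1 p.2) π := by
      refine (integrable_const C).mono' hc.measurable.aestronglyMeasurable ?_
      filter_upwards with p
      rw [Real.norm_eq_abs, abs_le]
      exact ⟨le_trans (by linarith) (hc0 p.1 p.2), hcC p.1 p.2⟩
    rw [e1, e2, ← integral_add i1 i2]
    exact integral_mono (i1.add i2) ic fun p => hkey2 p.1 p.2
  have hintfg : ∫ x, f x ∂μ ≤ ∫ x, h x ∂μ := integral_mono hintf hinth h1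
  have hintgg : ∫ y, g y ∂ν ≤ ∫ y, hc' y ∂ν := integral_mono hintg hinth' h2
  have hOTr : OTr c μ ν = sInf S := rfl
  have hle : ∫ x, h x ∂μ + ∫ y, hc' y ∂ν ≤ OTr c μ ν := by
    rw [hOTr]
    exact le_csInf hSne hub
  have hge : OTr c μ ν ≤ ∫ x, h x ∂μ + ∫ y, hc' y ∂ν := by
    rw [← hopt]
    linarith
  have heq : ∫ x, h x ∂μ + ∫ y, hc' y ∂ν = OTr c μ ν := le_antisymm hle hge
  -- each integral must be equal
  have e1 : ∫ x, f x ∂μ = ∫ x, h x ∂μ := by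
    rw [← hopt] at heq
    linarith
  have e2 : ∫ y, g y ∂ν = ∫ y, hc' y ∂ν := by
    rw [← hopt] at heq
    linarith
  have ae1 : f =ᵐ[μ] h := by
    have hz : ∫ x, (h x - f x) ∂μ = 0 := by
      rw [integral_sub hinth hintf, ← e1, sub_self]
    have h0 : (h - f) =ᵐ[μ] 0 :=
      (integral_eq_zero_iff_of_nonneg (fun x => by have := h1 x; simp [Pi.sub_apply]; linarith)
        (hinth.sub hintf)).1 hz
    filter_upwards [h0] with x hx
    simp only [Pi.zero_apply, Pi.sub_apply] at hx
    linarith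
  have ae2 : g =ᵐ[ν] hc' := by
    have hz : ∫ y, (hc' y - g y) ∂ν = 0 := by
      rw [integral_sub hinth' hintg, ← e2, sub_self]
    have h0 : (hc' - g) =ᵐ[ν] 0 :=
      (integral_eq_zero_iff_of_nonneg (fun y => by have := h2 y; simp [Pi.sub_apply]; linarith)
        (hinth'.sub hintg)).1 hz
    filter_upwards [h0] with y hy
    simp only [Pi.zero_apply, Pi.sub_apply] at hy
    linarith
  exact ⟨h1, h2, heq, ae1, ae2⟩
end

section
/- Let X, Y be Polish spaces, c continuous and bounded, μ ∈ P(X), ν ∈ P(Y). Suppose f ∈ S_c(μ,ν) is a Kantorovich potential that is constant μ-almost surely and continuous on supp(μ). Then μ is a ν-projected measure: any optimal transport plan π ∈ Π(μ,ν) satisfies c(x,y) = inf_{x' ∈ supp(μ)} c(x',y) for all (x,y) ∈ supp(π). -/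
/-!
A potential `f` that is continuous on `supp μ` and `μ`-a.e. equal to a constant `a` equals `a` on
all of `supp μ`, so its `c`-transform is `g - a` with `g y = inf_{x ∈ supp μ} c x y`. Optimality of
`f` then says `∫ g dν = OT_c(μ, ν)`. For an optimal plan `π` this means
`∫ (c - g ∘ snd) dπ = 0`, while `c - g ∘ snd ≥ 0` `π`-a.e. because the first marginal lives on
`supp μ`; hence `c = g ∘ snd` `π`-a.e. As an infimum of continuous functions `g` is upper
semicontinuous, so `{c - g ∘ snd > 0}` is an open `π`-null set, which misses `supp π`.
-/

open MeasureTheory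
open scoped ENNReal

open Set Filter

section Support

variable {X : Type*} [TopologicalSpace X] [MeasurableSpace X]

lemma msupport_eq_support (μ : Measure X) : msupport μ = μ.support := by
  ext x
  simp only [msupport, Measure.support_eq_forall_isOpen, pos_iff_ne_zero, mem_ofPred_eq]
  exact forall_congr' fun _ => Imp.swap

lemma eqOn_support_of_ae_eq_const [HereditarilyLindelofSpace X] {β : Type*} [TopologicalSpace β]
    [T1Space β] {μ : Measure X} {f : X → β} {a : β} (hf : ContinuousOn f μ.support)
    (hfa : f =ᵐ[μ] fun _ => a) : EqOn f (fun _ => a) μ.support := by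
  intro x hx
  by_contra hne
  obtain ⟨U, hU, hUf⟩ := mem_nhdsWithin_iff_exists_mem_nhds_inter.mp
    (hf x hx (isOpen_compl_singleton.mem_nhds hne))
  have hU0 : μ U = 0 := measure_eq_zero_iff_ae_notMem.mpr <| by
    filter_upwards [hfa, Measure.support_mem_ae] with y hfy hy hyU
    exact hUf ⟨hyU, hy⟩ hfy
  exact ((Measure.mem_support_iff_forall x).mp hx U hU).ne' hU0

lemma LowerSemicontinuous.le_of_ae_le_of_mem_support {β : Type*} [LinearOrder β]
    {μ : Measure X} {h : X → β} (hh : LowerSemicontinuous h) {b : β} (hb : ∀ᵐ x ∂μ, h x ≤ b)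
    {x : X} (hx : x ∈ μ.support) : h x ≤ b := by
  by_contra! hlt
  have hnull : μ (h ⁻¹' Ioi b) = 0 :=
    measure_eq_zero_iff_ae_notMem.mpr (hb.mono fun _ hy => not_lt.mpr hy)
  exact ((Measure.mem_support_iff_forall x).mp hx _
    ((hh.isOpen_preimage b).mem_nhds hlt)).ne' hnull

lemma mapsTo_support_map {Y : Type*} [TopologicalSpace Y] [MeasurableSpace Y] {μ : Measure X}
    {f : X → Y} (hf : Continuous f) (hfm : AEMeasurable f μ) :
    MapsTo f μ.support (μ.map f).support := by
  intro x hx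
  rw [Measure.mem_support_iff_forall]
  intro U hU
  exact ((Measure.mem_support_iff_forall x).mp hx _ (hf.continuousAt.preimage_mem_nhds hU)).trans_le
    (Measure.le_map_apply hfm U)

end Support

section LowerEnvelope

variable {X Y : Type*}

noncomputable def lowerEnvelope (c : X → Y → ℝ) (s : Set X) (y : Y) : ℝ :=
  sInf ((fun x => c x y) '' s)

variable {c : X → Y → ℝ} {s : Set X}

lemma bddBelow_image_of_nonneg (hc0 : ∀ x y, 0 ≤ c x y) (y : Y) :
    BddBelow ((fun x => c x y) '' s) :=
  ⟨0, by rintro _ ⟨x, -, rfl⟩; exact hc0 x y⟩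

lemma lowerEnvelope_le (hc0 : ∀ x y, 0 ≤ c x y) {x : X} (hx : x ∈ s) (y : Y) :
    lowerEnvelope c s y ≤ c x y :=
  csInf_le (bddBelow_image_of_nonneg hc0 y) (mem_image_of_mem _ hx)

lemma lowerEnvelope_nonneg (hc0 : ∀ x y, 0 ≤ c x y) (y : Y) : 0 ≤ lowerEnvelope c s y :=
  Real.sInf_nonneg (by rintro _ ⟨x, -, rfl⟩; exact hc0 x y)

lemma sInf_image_sub_eq_lowerEnvelope_sub (hs : s.Nonempty) (hc0 : ∀ x y, 0 ≤ c x y)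
    {f : X → ℝ} {a : ℝ} (hf : EqOn f (fun _ => a) s) (y : Y) :
    sInf ((fun x => c x y - f x) '' s) = lowerEnvelope c s y - a := by
  rw [image_congr fun x hx => by rw [hf hx], ← image_image (· - a) (fun x => c x y) s]
  exact ((OrderIso.subRight a).map_csInf' (hs.image _) (bddBelow_image_of_nonneg hc0 y)).symm

lemma upperSemicontinuous_lowerEnvelope [TopologicalSpace Y] (hc : ∀ x, Continuous (c x))
    (hc0 : ∀ x y, 0 ≤ c x y) : UpperSemicontinuous (lowerEnvelope c s) := by
  change UpperSemicontinuous fun y => sInf ((fun x => c x y) '' s)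
  simp_rw [sInf_image']
  exact upperSemicontinuous_ciInf (fun y => ⟨0, by rintro _ ⟨x, rfl⟩; exact hc0 x y⟩)
    fun x => (hc x).upperSemicontinuous

lemma integrable_lowerEnvelope [TopologicalSpace Y] [MeasurableSpace Y] [OpensMeasurableSpace Y]
    {ν : Measure Y} [IsFiniteMeasure ν] (hc : ∀ x, Continuous (c x)) (hc0 : ∀ x y, 0 ≤ c x y)
    {C : ℝ} (hcC : ∀ x y, c x y ≤ C) (hs : s.Nonempty) : Integrable (lowerEnvelope c s) ν := by
  obtain ⟨x₀, hx₀⟩ := hs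
  refine Integrable.of_bound
    (upperSemicontinuous_lowerEnvelope hc hc0).measurable.aestronglyMeasurable C
    (Eventually.of_forall fun y => ?_)
  rw [Real.norm_of_nonneg (lowerEnvelope_nonneg hc0 y)]
  exact (lowerEnvelope_le hc0 hx₀ y).trans (hcC x₀ y)

end LowerEnvelope

section Coupling

variable {X Y : Type*} [TopologicalSpace X] [MeasurableSpace X]
  [TopologicalSpace Y] [MeasurableSpace Y]
  {c : X → Y → ℝ} {μ : Measure X} {ν : Measure Y} {π : Measure (X × Y)}

lemma lowerEnvelope_support_ae_eq_of_integral_eq [SecondCountableTopology X]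
    [OpensMeasurableSpace X] [OpensMeasurableSpace Y] [IsFiniteMeasure π]
    (hc : Continuous fun p : X × Y => c p.1 p.2) (hc0 : ∀ x y, 0 ≤ c x y) {C : ℝ}
    (hcC : ∀ x y, c x y ≤ C) (hfst : π.map Prod.fst = μ) (hsnd : π.map Prod.snd = ν)
    (hμ : μ ≠ 0) (h : ∫ q, c q.1 q.2 ∂π = ∫ y, lowerEnvelope c μ.support y ∂ν) :
    (fun q : X × Y => lowerEnvelope c μ.support q.2) =ᵐ[π] fun q => c q.1 q.2 := by
  set g := lowerEnvelope c μ.support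
  have hg_int : Integrable g (π.map Prod.snd) :=
    integrable_lowerEnvelope (fun x => hc.comp (.prodMk_right x)) hc0 hcC
      (Measure.nonempty_support hμ)
  have hg_le_c : ∀ᵐ q ∂π, g q.2 ≤ c q.1 q.2 := by
    have : ∀ᵐ q ∂π, q.1 ∈ μ.support :=
      ae_of_ae_map measurable_fst.aemeasurable (hfst ▸ Measure.support_mem_ae)
    filter_upwards [this] with q hq using lowerEnvelope_le hc0 hq q.2
  refine (integral_eq_iff_of_ae_le (hg_int.comp_measurable measurable_snd)
    (Integrable.of_bound hc.aestronglyMeasurable C (Eventually.of_forall fun q => ?_))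
    hg_le_c).mp ?_
  · rw [Real.norm_of_nonneg (hc0 q.1 q.2)]
    exact hcC q.1 q.2
  · rw [h, ← hsnd, integral_map measurable_snd.aemeasurable hg_int.aestronglyMeasurable]
    rfl

lemma eq_lowerEnvelope_support_of_mem_support (hc : Continuous fun p : X × Y => c p.1 p.2)
    (hc0 : ∀ x y, 0 ≤ c x y) (hfst : π.map Prod.fst = μ)
    (hae : (fun q : X × Y => lowerEnvelope c μ.support q.2) =ᵐ[π] fun q => c q.1 q.2)
    {p : X × Y} (hp : p ∈ π.support) : c p.1 p.2 = lowerEnvelope c μ.support p.2 := by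
  have hlsc : LowerSemicontinuous fun q : X × Y => c q.1 q.2 - lowerEnvelope c μ.support q.2 :=
    hc.lowerSemicontinuous.add <| continuous_neg.comp_upperSemicontinuous_antitone
      ((upperSemicontinuous_lowerEnvelope (fun x => hc.comp (.prodMk_right x)) hc0).comp
        continuous_snd) fun _ _ => neg_le_neg
  have hp_le : c p.1 p.2 - lowerEnvelope c μ.support p.2 ≤ 0 :=
    hlsc.le_of_ae_le_of_mem_support (hae.mono fun q hq => (sub_eq_zero.mpr hq.symm).le) hp
  have hp1 : p.1 ∈ μ.support :=
    hfst ▸ mapsTo_support_map continuous_fst measurable_fst.aemeasurable hp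
  exact le_antisymm (sub_nonpos.mp hp_le) (lowerEnvelope_le hc0 hp1 p.2)

end Coupling

theorem stmt14_general {X Y : Type*}
    [TopologicalSpace X] [PolishSpace X] [MeasurableSpace X] [BorelSpace X]
    [TopologicalSpace Y] [MeasurableSpace Y] [BorelSpace Y]
    (c : X → Y → ℝ) (hc : Continuous fun p : X × Y => c p.1 p.2)
    (hc0 : ∀ x y, 0 ≤ c x y) (C : ℝ) (hcC : ∀ x y, c x y ≤ C)
    (μ : Measure X) (ν : Measure Y)
    [IsProbabilityMeasure μ] [IsProbabilityMeasure ν]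
    (f : X → ℝ) (fc : Y → ℝ)
    (hfc : ∀ y, fc y = sInf ((fun x => c x y - f x) '' msupport μ))
    (hopt : ∫ x, f x ∂μ + ∫ y, fc y ∂ν = OTr c μ ν)
    (hconst : ∃ a : ℝ, f =ᵐ[μ] fun _ => a)
    (hcont : ContinuousOn f (msupport μ)) :
    ∀ π : Measure (X × Y), IsCoupling π μ ν →
      (∫ p, c p.1 p.2 ∂π = OTr c μ ν) →
      ∀ p ∈ msupport π, c p.1 p.2 = sInf ((fun x' => c x' p.2) '' msupport μ) := by
  intro π ⟨hπ, hfst, hsnd⟩ hπopt p hp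
  obtain ⟨a, hfa⟩ := hconst
  simp only [msupport_eq_support] at hfc hcont hp ⊢
  have hs : μ.support.Nonempty := Measure.nonempty_support (IsProbabilityMeasure.ne_zero μ)
  have hg_int : Integrable (lowerEnvelope c μ.support) ν :=
    integrable_lowerEnvelope (fun x => hc.comp (.prodMk_right x)) hc0 hcC hs
  have hfc_eq : fc = fun y => lowerEnvelope c μ.support y - a :=
    funext fun y => (hfc y).trans
      (sInf_image_sub_eq_lowerEnvelope_sub hs hc0 (eqOn_support_of_ae_eq_const hcont hfa) y)
  have hg_OT : ∫ y, lowerEnvelope c μ.support y ∂ν = OTr c μ ν := by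
    rw [← hopt, integral_congr_ae hfa, hfc_eq, integral_sub hg_int (integrable_const a)]
    simp
  exact eq_lowerEnvelope_support_of_mem_support hc hc0 hfst
    (lowerEnvelope_support_ae_eq_of_integral_eq hc hc0 hcC hfst hsnd
      (IsProbabilityMeasure.ne_zero μ) (hπopt.trans hg_OT.symm)) hp

theorem stmt14 {X Y : Type*} [Nonempty X] [Nonempty Y]
    [TopologicalSpace X] [PolishSpace X] [MeasurableSpace X] [BorelSpace X]
    [TopologicalSpace Y] [PolishSpace Y] [MeasurableSpace Y] [BorelSpace Y]
    (c : X → Y → ℝ) (hc : Continuous fun p : X × Y => c p.1 p.2)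
    (hc0 : ∀ x y, 0 ≤ c x y) (C : ℝ) (hcC : ∀ x y, c x y ≤ C)
    (μ : Measure X) (ν : Measure Y)
    [IsProbabilityMeasure μ] [IsProbabilityMeasure ν]
    (f : X → ℝ) (fc : Y → ℝ)
    (hconc : ∃ g : Y → ℝ, ∀ x ∈ msupport μ,
      f x = sInf ((fun y => c x y - g y) '' msupport ν))
    (hfc : ∀ y, fc y = sInf ((fun x => c x y - f x) '' msupport μ))
    (hopt : ∫ x, f x ∂μ + ∫ y, fc y ∂ν = OTr c μ ν)
    (hconst : ∃ a : ℝ, f =ᵐ[μ] fun _ => a)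
    (hcont : ContinuousOn f (msupport μ)) :
    ∀ π : Measure (X × Y), IsCoupling π μ ν →
      (∫ p, c p.1 p.2 ∂π = OTr c μ ν) →
      ∀ p ∈ msupport π, c p.1 p.2 = sInf ((fun x' => c x' p.2) '' msupport μ) :=
  stmt14_general c hc hc0 C hcC μ ν f fc hfc hopt hconst hcont
end
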